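/- arXiv:2505.09410 — 2 statements merged into one kernel-verified Lean document; each statement's English description precedes it below -/
import Mathlib

section
/- Let q ∈ L^1(0,1) and y(x,λ) the solution of −y'' + qy = λy, y(0,λ)=0, y'(0,λ)=1, with ẏ denoting ∂/∂λ. If λ_k is a Dirichlet eigenvalue (y(1,λ_k) = 0), then ‖y(·,λ_k)‖²_{L²(0,1)} = y'(1,λ_k) · ẏ(1,λ_k). -/
/-!
Green's identity for `y(·,λ)` and `y(·,λₖ)` gives
`y(1,λ) y'(1,λₖ) = (λ - λₖ) ∫₀¹ y(·,λ) y(·,λₖ)`, since both vanish at `0` and `y(1,λₖ) = 0`.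
Dividing by `λ - λₖ` and letting `λ → λₖ` yields `y'(1,λₖ) ẏ(1,λₖ) = ∫₀¹ y(·,λₖ)²`, provided
`λ ↦ ∫₀¹ y(·,λ) y(·,λₖ)` is continuous. That continuity is a Gronwall estimate
`|y(x,λ) - y(x,μ)| ≤ C |λ - μ|` for the first-order system of `(y, y')`, whose weight
`1 + |q| + |λ|` is only integrable; Gronwall's inequality is proved with the integrating factor
`exp (-∫ k)` and the fundamental theorem of calculus for absolutely continuous functions.
-/

open MeasureTheory intervalIntegral Set Filter Topology

theorem ContDiff.comp_absolutelyContinuousOnInterval {E : Type*} [NormedAddCommGroup E]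
    [NormedSpace ℝ E] {φ : ℝ → E} {g : ℝ → ℝ} {a b : ℝ}
    (hφ : ContDiff ℝ 1 φ) (hg : AbsolutelyContinuousOnInterval g a b) :
    AbsolutelyContinuousOnInterval (φ ∘ g) a b := by
  obtain ⟨C, hC⟩ := hg.exists_bound
  obtain ⟨L, hL⟩ := hφ.contDiffOn.exists_lipschitzOnWith (s := Metric.closedBall 0 C) one_ne_zero
    (convex_closedBall 0 C) (isCompact_closedBall 0 C)
  have hmaps : ∀ x ∈ uIcc a b, g x ∈ Metric.closedBall 0 C := fun x hx => by
    simpa using hC x hx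
  have hlim := Tendsto.const_mul (L : ℝ) hg
  rw [mul_zero] at hlim
  refine squeeze_zero' (Eventually.of_forall fun _ => Finset.sum_nonneg fun _ _ => dist_nonneg) ?_
    hlim
  filter_upwards [mem_inf_of_right (mem_principal_self _)] with E hE
  rw [Finset.mul_sum]
  refine Finset.sum_le_sum fun i hi => ?_
  exact hL.dist_le_mul _ (hmaps _ (hE.1 i hi).1) _ (hmaps _ (hE.1 i hi).2)

theorem le_mul_exp_integral_of_le_add_integral {k B : ℝ → ℝ} {ε b : ℝ}
    (hk : IntervalIntegrable k volume 0 b) (hk0 : ∀ t, 0 ≤ k t) (hB : ContinuousOn B (Icc 0 b))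
    (hBle : ∀ x ∈ Icc 0 b, B x ≤ ε + ∫ t in 0..x, k t * B t) :
    ∀ x ∈ Icc 0 b, B x ≤ ε * Real.exp (∫ t in 0..x, k t) := by
  intro x hx
  have hsub : Icc 0 x ⊆ Icc 0 b := Icc_subset_Icc_right hx.2
  have hk' : IntervalIntegrable k volume 0 x :=
    hk.mono_set (by simpa [uIcc_of_le hx.1, uIcc_of_le (hx.1.trans hx.2)] using hsub)
  have hkB : IntervalIntegrable (fun t => k t * B t) volume 0 x :=
    hk'.mul_continuousOn (hB.mono (by simpa [uIcc_of_le hx.1] using hsub))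
  set K : ℝ → ℝ := fun s => ∫ t in 0..s, k t
  set R : ℝ → ℝ := fun s => ∫ t in 0..s, k t * B t
  -- Integrating factor: `F' = k (B - ε - R) e^{-K} ≤ 0` a.e., so `F x ≤ F 0 = ε`.
  set F : ℝ → ℝ := fun s => (ε + R s) * Real.exp (-K s)
  have hF : AbsolutelyContinuousOnInterval F 0 x :=
    ((LipschitzWith.const ε).lipschitzOnWith.absolutelyContinuousOnInterval.add
      (hkB.absolutelyContinuousOnInterval_intervalIntegral left_mem_uIcc)).mul
      ((Real.contDiff_exp.comp contDiff_neg).comp_absolutelyContinuousOnInterval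
        (hk'.absolutelyContinuousOnInterval_intervalIntegral left_mem_uIcc))
  have hF' : ∀ᵐ t, t ∈ Ioc 0 x → deriv F t ≤ 0 := by
    filter_upwards [hk'.ae_hasDerivAt_integral, hkB.ae_hasDerivAt_integral] with t hK hR ht
    have htx : t ∈ uIcc 0 x := by simpa [uIcc_of_le hx.1] using Ioc_subset_Icc_self ht
    rw [(((hR htx 0 left_mem_uIcc).const_add ε).fun_mul
      (hK htx 0 left_mem_uIcc).fun_neg.exp).deriv]
    have hBt := hBle t (hsub (Ioc_subset_Icc_self ht))
    nlinarith [mul_nonneg (mul_nonneg (hk0 t) (sub_nonneg.2 hBt)) (-K t).exp_pos.le]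
  have hFx : F x ≤ F 0 := by
    have hint : ∫ t in 0..x, deriv F t ≤ 0 := by
      rw [integral_of_le hx.1]
      exact integral_nonpos_of_ae ((ae_restrict_iff' measurableSet_Ioc).mpr hF')
    linarith [hF.integral_deriv_eq_sub]
  have hRx : ε + R x ≤ ε * Real.exp (K x) := by
    simpa [F, K, R, Real.exp_neg, ← div_eq_mul_inv, div_le_iff₀ (Real.exp_pos _)] using hFx
  exact (hBle x hx).trans hRx

theorem norm_add_norm_le_integral_of_hasDerivAt {E : Type*} [NormedAddCommGroup E]
    [NormedSpace ℝ E] [CompleteSpace E] {w w' g : ℝ → E} (hw : ∀ t, HasDerivAt w (w' t) t)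
    (hw' : ∀ t, HasDerivAt w' (g t) t) (h0 : w 0 = 0) (h0' : w' 0 = 0) {x : ℝ} (hx : 0 ≤ x)
    (hg : IntervalIntegrable g volume 0 x) :
    ‖w x‖ + ‖w' x‖ ≤ ∫ t in 0..x, (‖w' t‖ + ‖g t‖) := by
  have hcont : Continuous w' := continuous_iff_continuousAt.2 fun t => (hw' t).continuousAt
  have hwx : w x = ∫ t in 0..x, w' t := by
    rw [integral_eq_sub_of_hasDerivAt (fun t _ => hw t) (hcont.intervalIntegrable 0 x), h0,
      sub_zero]
  have hw'x : w' x = ∫ t in 0..x, g t := by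
    rw [integral_eq_sub_of_hasDerivAt (fun t _ => hw' t) hg, h0', sub_zero]
  rw [integral_add (hcont.norm.intervalIntegrable 0 x) hg.norm, hwx, hw'x]
  exact add_le_add (norm_integral_le_integral_norm hx) (norm_integral_le_integral_norm hx)

theorem hasDerivAt_of_forall_eq_add_sub_mul {𝕜 : Type*} [NontriviallyNormedField 𝕜]
    {f H : 𝕜 → 𝕜} {a : 𝕜} (h : ∀ z, f z = f a + (z - a) * H z) (hH : ContinuousAt H a) :
    HasDerivAt f (H a) a := by
  refine hasDerivAt_iff_tendsto_slope.2 ((hH.tendsto.mono_left nhdsWithin_le_nhds).congr' ?_)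
  filter_upwards [self_mem_nhdsWithin] with z hz
  rw [slope_def_field, h z, add_sub_cancel_left, mul_div_cancel_left₀ _ (sub_ne_zero.2 hz)]

theorem Complex.mul_self_eq_ofReal_norm_sq {z : ℂ} (hz : z.im = 0) :
    z * z = ((‖z‖ ^ 2 : ℝ) : ℂ) := by
  conv_lhs => enter [2]; rw [← Complex.conj_eq_iff_im.2 hz]
  rw [Complex.mul_conj, Complex.normSq_eq_norm_sq]

structure IsSturmLiouvilleSolution (q : ℝ → ℝ) (lam : ℂ) (u u' : ℝ → ℂ) : Prop where
  hasDerivAt : ∀ x, HasDerivAt u (u' x) x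
  hasDerivAt_deriv : ∀ x, HasDerivAt u' (((q x : ℂ) - lam) * u x) x

namespace IsSturmLiouvilleSolution

variable {q : ℝ → ℝ} {lam mu : ℂ} {u u' v v' : ℝ → ℂ}

theorem continuous (hu : IsSturmLiouvilleSolution q lam u u') : Continuous u :=
  continuous_iff_continuousAt.2 fun x => (hu.hasDerivAt x).continuousAt

theorem continuous_deriv (hu : IsSturmLiouvilleSolution q lam u u') : Continuous u' :=
  continuous_iff_continuousAt.2 fun x => (hu.hasDerivAt_deriv x).continuousAt

theorem wronskian_sub_eq_integral (hu : IsSturmLiouvilleSolution q lam u u')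
    (hv : IsSturmLiouvilleSolution q mu v v') (a b : ℝ) :
    (u b * v' b - u' b * v b) - (u a * v' a - u' a * v a) =
      (lam - mu) * ∫ x in a..b, u x * v x := by
  have hW : ∀ x, HasDerivAt (fun t => u t * v' t - u' t * v t) ((lam - mu) * (u x * v x)) x :=
    fun x => (((hu.hasDerivAt x).mul (hv.hasDerivAt_deriv x)).sub
      ((hu.hasDerivAt_deriv x).mul (hv.hasDerivAt x))).congr_deriv (by ring)
  rw [← intervalIntegral.integral_const_mul, integral_eq_sub_of_hasDerivAt (fun x _ => hW x)
    ((continuous_const.mul (hu.continuous.mul hv.continuous)).intervalIntegrable a b)]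

theorem norm_sub_add_norm_sub_le {b : ℝ} (hq : IntervalIntegrable q volume 0 b)
    (hu : IsSturmLiouvilleSolution q lam u u') (hv : IsSturmLiouvilleSolution q mu v v')
    (h0 : u 0 = v 0) (h0' : u' 0 = v' 0) {r : ℝ} (hr : ‖lam‖ ≤ r) :
    ∀ x ∈ Icc 0 b, ‖u x - v x‖ + ‖u' x - v' x‖ ≤ ‖lam - mu‖ * (∫ t in 0..b, ‖v t‖) +
      ∫ t in 0..x, (1 + ‖q t‖ + r) * (‖u t - v t‖ + ‖u' t - v' t‖) := by
  intro x hx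
  set g : ℝ → ℂ := fun t => ((q t : ℂ) - lam) * (u t - v t) + (mu - lam) * v t
  have hsub : uIcc 0 x ⊆ uIcc 0 b := by
    rw [uIcc_of_le hx.1, uIcc_of_le (hx.1.trans hx.2)]
    exact Icc_subset_Icc_right hx.2
  have hqx : IntervalIntegrable q volume 0 x := hq.mono_set hsub
  have hqxC : IntervalIntegrable (fun t => (q t : ℂ)) volume 0 x := ⟨hqx.1.ofReal, hqx.2.ofReal⟩
  have hg : IntervalIntegrable g volume 0 x :=
    ((hqxC.sub intervalIntegrable_const).mul_continuousOn
      (hu.continuous.sub hv.continuous).continuousOn).add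
      ((continuous_const.mul hv.continuous).intervalIntegrable 0 x)
  have hpt : ∀ t, ‖u' t - v' t‖ + ‖g t‖ ≤
      (1 + ‖q t‖ + r) * (‖u t - v t‖ + ‖u' t - v' t‖) + ‖lam - mu‖ * ‖v t‖ := by
    intro t
    have hqlam : ‖(q t : ℂ) - lam‖ ≤ ‖q t‖ + r :=
      (norm_sub_le _ _).trans (by rw [Complex.norm_real]; linarith)
    have hgt : ‖g t‖ ≤ (‖q t‖ + r) * ‖u t - v t‖ + ‖lam - mu‖ * ‖v t‖ := by
      refine (norm_add_le _ _).trans ?_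
      rw [norm_mul, norm_mul, norm_sub_rev mu]
      gcongr
    have hr0 : 0 ≤ ‖q t‖ + r := add_nonneg (norm_nonneg _) ((norm_nonneg lam).trans hr)
    nlinarith [norm_nonneg (u t - v t), mul_nonneg hr0 (norm_nonneg (u' t - v' t))]
  have hk : IntervalIntegrable (fun t => (1 + ‖q t‖ + r) * (‖u t - v t‖ + ‖u' t - v' t‖))
      volume 0 x :=
    ((intervalIntegrable_const.add hqx.norm).add intervalIntegrable_const).mul_continuousOn
      ((hu.continuous.sub hv.continuous).norm.add
        (hu.continuous_deriv.sub hv.continuous_deriv).norm).continuousOn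
  have hv_le : ∫ t in 0..x, ‖v t‖ ≤ ∫ t in 0..b, ‖v t‖ :=
    integral_mono_interval le_rfl hx.1 hx.2 (Eventually.of_forall fun _ => norm_nonneg _)
      (hv.continuous.norm.intervalIntegrable 0 b)
  calc ‖u x - v x‖ + ‖u' x - v' x‖ ≤ ∫ t in 0..x, (‖u' t - v' t‖ + ‖g t‖) :=
        norm_add_norm_le_integral_of_hasDerivAt
          (fun t => (hu.hasDerivAt t).sub (hv.hasDerivAt t))
          (fun t => ((hu.hasDerivAt_deriv t).sub (hv.hasDerivAt_deriv t)).congr_deriv (by ring))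
          (sub_eq_zero.2 h0) (sub_eq_zero.2 h0') hx.1 hg
    _ ≤ ∫ t in 0..x, ((1 + ‖q t‖ + r) * (‖u t - v t‖ + ‖u' t - v' t‖) + ‖lam - mu‖ * ‖v t‖) :=
        integral_mono_on hx.1
          (((hu.continuous_deriv.sub hv.continuous_deriv).norm.intervalIntegrable 0 x).add hg.norm)
          (hk.add ((hv.continuous.norm.intervalIntegrable 0 x).const_mul _)) fun t _ => hpt t
    _ = (∫ t in 0..x, (1 + ‖q t‖ + r) * (‖u t - v t‖ + ‖u' t - v' t‖)) +
          ‖lam - mu‖ * ∫ t in 0..x, ‖v t‖ := by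
        rw [integral_add hk ((hv.continuous.norm.intervalIntegrable 0 x).const_mul _),
          intervalIntegral.integral_const_mul]
    _ ≤ _ := by nlinarith [norm_nonneg (lam - mu)]

theorem norm_sub_le_mul_exp_integral {b : ℝ} (hq : IntervalIntegrable q volume 0 b)
    (hu : IsSturmLiouvilleSolution q lam u u') (hv : IsSturmLiouvilleSolution q mu v v')
    (h0 : u 0 = v 0) (h0' : u' 0 = v' 0) {r : ℝ} (hr : ‖lam‖ ≤ r) :
    ∀ x ∈ Icc 0 b, ‖u x - v x‖ ≤
      ‖lam - mu‖ * (∫ t in 0..b, ‖v t‖) * Real.exp (∫ t in 0..b, (1 + ‖q t‖ + r)) := by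
  intro x hx
  have hr0 : 0 ≤ r := (norm_nonneg lam).trans hr
  have hk : IntervalIntegrable (fun t => 1 + ‖q t‖ + r) volume 0 b :=
    (intervalIntegrable_const.add hq.norm).add intervalIntegrable_const
  have hk0 : ∀ t, 0 ≤ 1 + ‖q t‖ + r := fun t => by positivity
  have hε : 0 ≤ ‖lam - mu‖ * ∫ t in 0..b, ‖v t‖ :=
    mul_nonneg (norm_nonneg _)
      (integral_nonneg (hx.1.trans hx.2) fun _ _ => norm_nonneg _)
  calc ‖u x - v x‖ ≤ ‖u x - v x‖ + ‖u' x - v' x‖ := le_add_of_nonneg_right (norm_nonneg _)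
    _ ≤ ‖lam - mu‖ * (∫ t in 0..b, ‖v t‖) * Real.exp (∫ t in 0..x, (1 + ‖q t‖ + r)) :=
        le_mul_exp_integral_of_le_add_integral hk hk0
          ((hu.continuous.sub hv.continuous).norm.add
            (hu.continuous_deriv.sub hv.continuous_deriv).norm).continuousOn
          (norm_sub_add_norm_sub_le hq hu hv h0 h0' hr) x hx
    _ ≤ ‖lam - mu‖ * (∫ t in 0..b, ‖v t‖) * Real.exp (∫ t in 0..b, (1 + ‖q t‖ + r)) := by
        gcongr
        exact integral_mono_interval le_rfl hx.1 hx.2 (Eventually.of_forall hk0) hk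

theorem continuousAt_integral_mul {y y' : ℂ → ℝ → ℂ} {f : ℝ → ℂ} {b : ℝ} {c c' : ℂ} (hb : 0 ≤ b)
    (hq : IntervalIntegrable q volume 0 b) (hf : IntervalIntegrable f volume 0 b)
    (hy : ∀ lam, IsSturmLiouvilleSolution q lam (y lam) (y' lam))
    (hy0 : ∀ lam, y lam 0 = c) (hy'0 : ∀ lam, y' lam 0 = c') (mu : ℂ) :
    ContinuousAt (fun lam => ∫ x in 0..b, y lam x * f x) mu := by
  set M := (∫ t in 0..b, ‖y mu t‖) * Real.exp (∫ t in 0..b, (1 + ‖q t‖ + (‖mu‖ + 1))) *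
    ∫ t in 0..b, ‖f t‖
  have hbound : ∀ lam ∈ Metric.closedBall mu 1,
      ‖(∫ x in 0..b, y lam x * f x) - ∫ x in 0..b, y mu x * f x‖ ≤ ‖lam - mu‖ * M := by
    intro lam hlam
    have hlam' : ‖lam‖ ≤ ‖mu‖ + 1 :=
      (norm_le_insert' lam mu).trans (by simpa [dist_eq_norm] using hlam)
    have hint : ∀ lam, IntervalIntegrable (fun x => y lam x * f x) volume 0 b := fun lam =>
      hf.continuousOn_mul (hy lam).continuous.continuousOn
    rw [← integral_sub (hint lam) (hint mu)]
    refine (intervalIntegral.norm_integral_le_integral_norm hb).trans ?_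
    calc ∫ x in 0..b, ‖y lam x * f x - y mu x * f x‖
        ≤ ∫ x in 0..b, ‖lam - mu‖ * (∫ t in 0..b, ‖y mu t‖) *
            Real.exp (∫ t in 0..b, (1 + ‖q t‖ + (‖mu‖ + 1))) * ‖f x‖ := by
          refine integral_mono_on hb ((hint lam).sub (hint mu)).norm (hf.norm.const_mul _)
            fun x hx => ?_
          rw [← sub_mul, norm_mul]
          gcongr
          exact norm_sub_le_mul_exp_integral hq (hy lam) (hy mu) ((hy0 lam).trans (hy0 mu).symm)
            ((hy'0 lam).trans (hy'0 mu).symm) hlam' x hx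
      _ = ‖lam - mu‖ * M := by
          rw [intervalIntegral.integral_const_mul]
          ring
  rw [ContinuousAt, tendsto_iff_norm_sub_tendsto_zero]
  refine squeeze_zero' (Eventually.of_forall fun _ => norm_nonneg _)
    (eventually_of_mem (Metric.closedBall_mem_nhds mu one_pos) hbound) ?_
  exact (show Continuous fun lam : ℂ => ‖lam - mu‖ * M by fun_prop).tendsto' mu 0 (by simp)

end IsSturmLiouvilleSolution

theorem stmt10_general
    (q : ℝ → ℝ) (hq : IntervalIntegrable q MeasureTheory.volume 0 1)
    (y yd : ℂ → ℝ → ℂ)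
    (hy' : ∀ lam : ℂ, ∀ x : ℝ, HasDerivAt (y lam) (yd lam x) x)
    (hy'' : ∀ lam : ℂ, ∀ x : ℝ,
      HasDerivAt (yd lam) (((q x : ℂ) - lam) * y lam x) x)
    (hy0 : ∀ lam : ℂ, y lam 0 = 0) (hyd0 : ∀ lam : ℂ, yd lam 0 = 1)
    (lamk : ℂ) (heig : y lamk 1 = 0)
    (hyreal : ∀ x : ℝ, (y lamk x).im = 0)
    (ydot : ℂ) (hydot : HasDerivAt (fun lam : ℂ => y lam 1) ydot lamk) :
    ((∫ x in (0:ℝ)..1, ‖y lamk x‖ ^ 2 : ℝ) : ℂ) = yd lamk 1 * ydot := by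
  have hsol : ∀ lam, IsSturmLiouvilleSolution q lam (y lam) (yd lam) := fun lam =>
    ⟨hy' lam, hy'' lam⟩
  set H : ℂ → ℂ := fun lam => ∫ x in (0:ℝ)..1, y lam x * y lamk x
  have hW : ∀ lam, y lam 1 * yd lamk 1 = y lamk 1 * yd lamk 1 + (lam - lamk) * H lam := by
    intro lam
    have := (hsol lam).wronskian_sub_eq_integral (hsol lamk) 0 1
    rw [hy0, hy0, heig] at this
    rw [heig, ← this]
    ring
  have hH : HasDerivAt (fun lam => y lam 1 * yd lamk 1) (H lamk) lamk :=
    hasDerivAt_of_forall_eq_add_sub_mul hW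
      (IsSturmLiouvilleSolution.continuousAt_integral_mul zero_le_one hq
        ((hsol lamk).continuous.intervalIntegrable 0 1) hsol hy0 hyd0 lamk)
  rw [mul_comm, (hydot.mul_const _).unique hH, ← intervalIntegral.integral_ofReal]
  exact intervalIntegral.integral_congr fun x _ =>
    (Complex.mul_self_eq_ofReal_norm_sq (hyreal x)).symm

/-- Sturm–Liouville norming-constant identity: if `y(·,λ)` solves
`−y'' + q y = λ y`, `y(0,λ)=0`, `y'(0,λ)=1`, `λ_k` is a Dirichlet eigenvalue
(`y(1,λ_k)=0`, real, with real eigenfunction), and `ẏ` denotes `∂/∂λ`, then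
`‖y(·,λ_k)‖²_{L²(0,1)} = y'(1,λ_k) · ẏ(1,λ_k)`. -/
theorem stmt10
    (q : ℝ → ℝ) (hq : IntervalIntegrable q MeasureTheory.volume 0 1)
    (y yd : ℂ → ℝ → ℂ)
    (hy' : ∀ lam : ℂ, ∀ x : ℝ, HasDerivAt (y lam) (yd lam x) x)
    (hy'' : ∀ lam : ℂ, ∀ x : ℝ,
      HasDerivAt (yd lam) (((q x : ℂ) - lam) * y lam x) x)
    (hy0 : ∀ lam : ℂ, y lam 0 = 0) (hyd0 : ∀ lam : ℂ, yd lam 0 = 1)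
    (lamk : ℂ) (heig : y lamk 1 = 0)
    (hlamkreal : lamk.im = 0) (hyreal : ∀ x : ℝ, (y lamk x).im = 0)
    (ydot : ℂ) (hydot : HasDerivAt (fun lam : ℂ => y lam 1) ydot lamk) :
    ((∫ x in (0:ℝ)..1, ‖y lamk x‖ ^ 2 : ℝ) : ℂ) = yd lamk 1 * ydot :=
  stmt10_general q hq y yd hy' hy'' hy0 hyd0 lamk heig hyreal ydot hydot
end

section
/- Let x(t) solve x' = Ax + bf, x(0)=0 and y(t) solve y' = A*y + dg, y(0)=0, with outputs z(t) = ⟨x(t), d⟩ and w(t) = ⟨y(t), b⟩. Then the connecting operator C^T defined by ⟨C^T f, g⟩_{L²(0,T)} = ⟨x(T), y(T)⟩_H admits the representation (C^T f)(t) = ∫_0^T r(2T − t − τ) f(τ) dτ, where r is the response kernel satisfying z(t) = ∫_0^t r(t−τ) f(τ) dτ. -/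
/-!
Variation of constants writes `x(T) = ∫₀ᵀ f(τ) e^{(T-τ)A} b dτ` and
`y(T) = ∫₀ᵀ g(s) e^{(T-s)A*} d ds`. Moving `e^{(T-s)A*}` across the inner product and using the
group law `e^{(T-s)A} e^{(T-τ)A} = e^{(2T-s-τ)A}` gives
`⟨x(T), y(T)⟩ = ∫₀ᵀ ∫₀ᵀ ⟨e^{(2T-s-τ)A} b, d⟩ f(τ) conj(g(s)) dτ ds`.
-/

open NormedSpace ContinuousLinearMap intervalIntegral MeasureTheory
open scoped InnerProductSpace ComplexConjugate

section VariationOfConstants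

variable {E : Type*} [NormedAddCommGroup E] [NormedSpace ℂ E] [CompleteSpace E]

@[fun_prop]
theorem Continuous.exp_smul {α : Type*} [TopologicalSpace α] (B : E →L[ℂ] E) {φ : α → ℝ}
    (hφ : Continuous φ) : Continuous fun a => exp (φ a • B) :=
  (continuous_iff_continuousAt.2 fun s => (hasDerivAt_exp_smul_const B s).continuousAt).comp hφ

theorem variation_of_constants (B : E →L[ℂ] E) {F : ℝ → E} (hF : Continuous F) {x : ℝ → E}
    (hx0 : x 0 = 0) (hx : ∀ t, HasDerivAt x (B (x t) + F t) t) (T : ℝ) :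
    x T = ∫ s in 0..T, exp ((T - s) • B) (F s) := by
  let R : (E →L[ℂ] E) →L[ℝ] (E →L[ℝ] E) := restrictScalarsL ℂ E E ℝ ℝ
  have hu : ∀ t, HasDerivAt (fun t => R (exp ((T - t) • B)) (x t))
      (exp ((T - t) • B) (F t)) t := by
    intro t
    have hexp : HasDerivAt (fun t : ℝ => exp ((T - t) • B)) (-(exp ((T - t) • B) * B)) t := by
      simpa [Function.comp_def] using
        (hasDerivAt_exp_smul_const B (T - t)).scomp t ((hasDerivAt_id t).const_sub T)
    refine ((R.hasFDerivAt.comp_hasDerivAt t hexp).clm_apply (hx t)).congr_deriv ?_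
    change -exp ((T - t) • B) (B (x t)) + exp ((T - t) • B) (B (x t) + F t) = _
    rw [map_add, neg_add_cancel_left]
  rw [integral_eq_sub_of_hasDerivAt (fun t _ => hu t)
    (Continuous.intervalIntegrable (by fun_prop) 0 T)]
  simp [R, hx0]

end VariationOfConstants

theorem exp_smul_mul_exp_smul {𝔸 : Type*} [NormedRing 𝔸] [NormedAlgebra ℝ 𝔸] [CompleteSpace 𝔸]
    (B : 𝔸) (s t : ℝ) : exp (s • B) * exp (t • B) = exp ((s + t) • B) := by
  let : NormedAlgebra ℚ 𝔸 := .restrictScalars ℚ ℝ 𝔸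
  rw [add_smul, exp_add_of_commute (((Commute.refl B).smul_left s).smul_right t)]

section InnerProduct

variable {H : Type*} [NormedAddCommGroup H] [InnerProductSpace ℂ H] [CompleteSpace H]

theorem inner_intervalIntegral_right {F : ℝ → H} {a b : ℝ}
    (hF : IntervalIntegrable F volume a b) (c : H) :
    ⟪c, ∫ t in a..b, F t⟫_ℂ = ∫ t in a..b, ⟪c, F t⟫_ℂ :=
  ((innerSL ℂ c).intervalIntegral_comp_comm hF).symm

theorem inner_intervalIntegral_left {F : ℝ → H} {a b : ℝ}
    (hF : IntervalIntegrable F volume a b) (c : H) :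
    ⟪∫ t in a..b, F t, c⟫_ℂ = ∫ t in a..b, ⟪F t, c⟫_ℂ := by
  rw [← inner_conj_symm, inner_intervalIntegral_right hF, ← intervalIntegral_conj]
  simp_rw [inner_conj_symm]

theorem exp_smul_adjoint (A : H →L[ℂ] H) (s : ℝ) :
    exp (s • adjoint A) = adjoint (exp (s • A)) := by
  rw [← star_eq_adjoint, ← star_eq_adjoint, star_exp, star_smul, star_trivial s]

end InnerProduct

theorem stmt15_general
    {H : Type*} [NormedAddCommGroup H] [InnerProductSpace ℂ H]
    [CompleteSpace H] (A : H →L[ℂ] H) (b d : H) (T : ℝ)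
    (f g : ℝ → ℂ) (hf : Continuous f) (hg : Continuous g)
    (x y : ℝ → H) (hx0 : x 0 = 0) (hy0 : y 0 = 0)
    (hx : ∀ t : ℝ, HasDerivAt x (A (x t) + f t • b) t)
    (hy : ∀ t : ℝ, HasDerivAt y ((ContinuousLinearMap.adjoint A) (y t) + g t • d) t)
    (r : ℝ → ℂ)
    (hr : ∀ t : ℝ, r t = (inner ℂ d ((NormedSpace.exp ((t : ℂ) • A)) b) : ℂ)) :
    (∫ t in (0:ℝ)..T,
        (∫ τ in (0:ℝ)..T, r (2 * T - t - τ) * f τ) * (starRingEnd ℂ) (g t))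
      = (inner ℂ (y T) (x T) : ℂ) := by
  have hxT : x T = ∫ τ in 0..T, f τ • exp ((T - τ) • A) b := by
    simpa using variation_of_constants A (hf.smul continuous_const) hx0 hx T
  have hyT : y T = ∫ s in 0..T, g s • exp ((T - s) • adjoint A) d := by
    simpa using variation_of_constants (adjoint A) (hg.smul continuous_const) hy0 hy T
  have hkernel (s : ℝ) :
      ⟪d, exp ((T - s) • A) (x T)⟫_ℂ = ∫ τ in 0..T, r (2 * T - s - τ) * f τ := by
    rw [hxT, ← (exp ((T - s) • A)).intervalIntegral_comp_comm
      (Continuous.intervalIntegrable (by fun_prop) _ _),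
      inner_intervalIntegral_right (Continuous.intervalIntegrable (by fun_prop) _ _)]
    refine integral_congr fun τ _ => ?_
    rw [map_smul, inner_smul_right, ← mul_apply_eq_comp, exp_smul_mul_exp_smul, hr,
      Complex.coe_smul, mul_comm]
    ring_nf
  calc _ = ∫ s in 0..T, conj (g s) * ⟪d, exp ((T - s) • A) (x T)⟫_ℂ :=
        integral_congr fun s _ => by rw [hkernel, mul_comm]
    _ = ⟪y T, x T⟫_ℂ := by
        rw [hyT, inner_intervalIntegral_left (Continuous.intervalIntegrable (by fun_prop) _ _)]
        refine integral_congr fun s _ => ?_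
        rw [inner_smul_left, exp_smul_adjoint, adjoint_inner_left]

/-- Representation of the connecting operator: if `x' = Ax + bf`, `x(0)=0`,
`y' = A*y + dg`, `y(0)=0`, and `r(t) = ⟨e^{At} b, d⟩` is the response kernel
(so that `z(t) = ⟨x(t), d⟩ = ∫_0^t r(t−τ) f(τ) dτ`), then the connecting
operator defined by `⟨C^T f, g⟩_{L²(0,T)} = ⟨x(T), y(T)⟩_H` admits the kernel
representation `(C^T f)(t) = ∫_0^T r(2T−t−τ) f(τ) dτ`; i.e.
`∫_0^T (∫_0^T r(2T−t−τ) f(τ) dτ) conj(g(t)) dt = ⟨x(T), y(T)⟩_H`.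
(Inner products are linear in the first slot: `⟨u,v⟩ = ⟪v,u⟫` in Mathlib.) -/
theorem stmt15
    {H : Type*} [NormedAddCommGroup H] [InnerProductSpace ℂ H]
    [CompleteSpace H] [FiniteDimensional ℂ H]
    (A : H →L[ℂ] H) (b d : H) (T : ℝ) (hT : 0 < T)
    (f g : ℝ → ℂ) (hf : Continuous f) (hg : Continuous g)
    (x y : ℝ → H) (hx0 : x 0 = 0) (hy0 : y 0 = 0)
    (hx : ∀ t : ℝ, HasDerivAt x (A (x t) + f t • b) t)
    (hy : ∀ t : ℝ, HasDerivAt y ((ContinuousLinearMap.adjoint A) (y t) + g t • d) t)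
    (r : ℝ → ℂ)
    (hr : ∀ t : ℝ, r t = (inner ℂ d ((NormedSpace.exp ((t : ℂ) • A)) b) : ℂ))
    (z : ℝ → ℂ) (hz : ∀ t : ℝ, z t = (inner ℂ d (x t) : ℂ))
    (hzr : ∀ t ∈ Set.Icc (0:ℝ) T, z t = ∫ τ in (0:ℝ)..t, r (t - τ) * f τ) :
    (∫ t in (0:ℝ)..T,
        (∫ τ in (0:ℝ)..T, r (2 * T - t - τ) * f τ) * (starRingEnd ℂ) (g t))
      = (inner ℂ (y T) (x T) : ℂ) :=
  stmt15_general A b d T f g hf hg x y hx0 hy0 hx hy r hr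
end
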